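/- arXiv:1706.06930 — 7 statements merged into one kernel-verified Lean document; each statement's English description precedes it below -/
import Mathlib

section
/- With 𝓡 the block matrix built from R as in the noncommutative product construction (𝓡^{λμ}_{τρ} = δ^λ_ρ δ^μ_τ, 𝓡^{γδ}_{αβ} = δ^γ_β δ^δ_α, 𝓡^{λα}_{βμ} = R^{λα}_{βμ}, 𝓡^{αλ}_{μβ} = R̄^{λα}_{βμ}, other mixed components zero), the Yang–Baxter equation (𝓡⊗1)(1⊗𝓡)(𝓡⊗1) = (1⊗𝓡)(𝓡⊗1)(1⊗𝓡) on (ℂ^{N₁+N₂})^{⊗3} holds if and only if the following six families of component equations hold for all admissible indices: (1) Σ_ρ R^{λα}_{γρ} R^{ρβ}_{δμ} = Σ_ρ R^{λβ}_{δρ} R^{ρα}_{γμ}; (2) the same with R replaced by R̄; (3) Σ_ρ R̄^{λα}_{γρ} R^{ρβ}_{δμ} = Σ_ρ R^{λβ}_{δρ} R̄^{ρα}_{γμ}; (4) Σ_γ R^{λα}_{γν} R^{μγ}_{βρ} = Σ_γ R^{μα}_{γρ} R^{λγ}_{βν}; (5) the same with R replaced by R̄; (6) Σ_γ R^{λα}_{γν}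 R̄^{μγ}_{βρ} = Σ_γ R̄^{μα}_{γρ} R^{λγ}_{βν}. -/
/-! 𝓡 maps `ℂ^{N_i} ⊗ ℂ^{N_j}` into `ℂ^{N_j} ⊗ ℂ^{N_i}` (`bigR_eq_zero`), so the Yang–Baxter
equation splits into 64 blocks, labelled by the summand in which each of the six outer indices
lies. Once the Kronecker deltas of the flip parts of 𝓡 are contracted, the two unmixed blocks
become the braid relation of the flip, and each mixed block is either trivial or one of the six
families. -/

open Complex

/-- The block matrix 𝓡 built from `R`. Combined indices are modelled by `Fin N₁ ⊕ Fin N₂`. -/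
noncomputable def bigR {N1 N2 : ℕ} (R : Fin N1 → Fin N2 → Fin N2 → Fin N1 → ℂ) :
    Matrix ((Fin N1 ⊕ Fin N2) × (Fin N1 ⊕ Fin N2)) ((Fin N1 ⊕ Fin N2) × (Fin N1 ⊕ Fin N2)) ℂ :=
  fun p q =>
    match p, q with
    | (Sum.inl l, Sum.inl m), (Sum.inl t, Sum.inl r) =>
        (if l = r then 1 else 0) * (if m = t then 1 else 0)
    | (Sum.inr g, Sum.inr d), (Sum.inr a, Sum.inr b) =>
        (if g = b then 1 else 0) * (if d = a then 1 else 0)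
    | (Sum.inl l, Sum.inr a), (Sum.inr b, Sum.inl m) => R l a b m
    | (Sum.inr a, Sum.inl l), (Sum.inl m, Sum.inr b) => (starRingEnd ℂ) (R l a b m)
    | _, _ => 0

/-- `M ⊗ 1` acting on the first two of three tensor factors. -/
def op12 {X : Type*} [DecidableEq X] (M : Matrix (X × X) (X × X) ℂ) :
    Matrix (X × X × X) (X × X × X) ℂ :=
  fun p q => M (p.1, p.2.1) (q.1, q.2.1) * (if p.2.2 = q.2.2 then 1 else 0)

/-- `1 ⊗ M` acting on the last two of three tensor factors. -/
def op23 {X : Type*} [DecidableEq X] (M : Matrix (X × X) (X × X) ℂ) :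
    Matrix (X × X × X) (X × X × X) ℂ :=
  fun p q => (if p.1 = q.1 then 1 else 0) * M (p.2.1, p.2.2) (q.2.1, q.2.2)

section TripleProduct

variable {X : Type*} [DecidableEq X] [Fintype X] (M : Matrix (X × X) (X × X) ℂ)

theorem op12_mul_op23_mul_op12_apply (p q : X × X × X) :
    (op12 M * op23 M * op12 M) p q =
      ∑ u : X, ∑ v : X, ∑ w : X,
        M (p.1, p.2.1) (u, w) * M (w, p.2.2) (v, q.2.2) * M (u, v) (q.1, q.2.1) := by
  obtain ⟨p1, p2, p3⟩ := p
  obtain ⟨q1, q2, q3⟩ := q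
  simp [Matrix.mul_apply, op12, op23, Fintype.sum_prod_type, Finset.sum_mul, mul_ite, ite_mul]

theorem op23_mul_op12_mul_op23_apply (p q : X × X × X) :
    (op23 M * op12 M * op23 M) p q =
      ∑ u : X, ∑ v : X, ∑ w : X,
        M (p.2.1, p.2.2) (w, v) * M (p.1, w) (q.1, u) * M (u, v) (q.2.1, q.2.2) := by
  obtain ⟨p1, p2, p3⟩ := p
  obtain ⟨q1, q2, q3⟩ := q
  simp [Matrix.mul_apply, op12, op23, Fintype.sum_prod_type, Finset.sum_mul, mul_ite, ite_mul]

theorem yangBaxter_iff_forall_sum_eq :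
    op12 M * op23 M * op12 M = op23 M * op12 M * op23 M ↔
      ∀ p q : X × X × X,
        ∑ u : X, ∑ v : X, ∑ w : X,
          M (p.1, p.2.1) (u, w) * M (w, p.2.2) (v, q.2.2) * M (u, v) (q.1, q.2.1) =
        ∑ u : X, ∑ v : X, ∑ w : X,
          M (p.2.1, p.2.2) (w, v) * M (p.1, w) (q.1, u) * M (u, v) (q.2.1, q.2.2) := by
  simp only [← op12_mul_op23_mul_op12_apply, ← op23_mul_op12_mul_op23_apply, ← Matrix.ext_iff]

end TripleProduct

section BlockStructure

variable {N1 N2 : ℕ} (R : Fin N1 → Fin N2 → Fin N2 → Fin N1 → ℂ)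

@[simp] theorem bigR_inl_inl_inl_inl (l m t r : Fin N1) :
    bigR R (.inl l, .inl m) (.inl t, .inl r) =
      (if l = r then 1 else 0) * (if m = t then 1 else 0) :=
  rfl

@[simp] theorem bigR_inr_inr_inr_inr (g d a b : Fin N2) :
    bigR R (.inr g, .inr d) (.inr a, .inr b) =
      (if g = b then 1 else 0) * (if d = a then 1 else 0) :=
  rfl

@[simp] theorem bigR_inl_inr_inr_inl (l : Fin N1) (a b : Fin N2) (m : Fin N1) :
    bigR R (.inl l, .inr a) (.inr b, .inl m) = R l a b m :=
  rfl

@[simp] theorem bigR_inr_inl_inl_inr (a : Fin N2) (l m : Fin N1) (b : Fin N2) :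
    bigR R (.inr a, .inl l) (.inl m, .inr b) = starRingEnd ℂ (R l a b m) :=
  rfl

@[simp] theorem bigR_eq_zero {p q : (Fin N1 ⊕ Fin N2) × (Fin N1 ⊕ Fin N2)}
    (h : q.1.isLeft ≠ p.2.isLeft ∨ q.2.isLeft ≠ p.1.isLeft) : bigR R p q = 0 := by
  obtain ⟨p1 | p1, p2 | p2⟩ := p <;> obtain ⟨q1 | q1, q2 | q2⟩ := q <;> simp_all [bigR]

end BlockStructure

/-- The Yang–Baxter equation for 𝓡 is equivalent to the six families of component equations
for `R` and its conjugate. -/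
theorem stmt1 {N1 N2 : ℕ} (R : Fin N1 → Fin N2 → Fin N2 → Fin N1 → ℂ) :
    (op12 (bigR R) * op23 (bigR R) * op12 (bigR R) =
      op23 (bigR R) * op12 (bigR R) * op23 (bigR R)) ↔
    ((∀ (l m : Fin N1) (a b g d : Fin N2),
        ∑ r : Fin N1, R l a g r * R r b d m = ∑ r : Fin N1, R l b d r * R r a g m) ∧
     (∀ (l m : Fin N1) (a b g d : Fin N2),
        ∑ r : Fin N1, (starRingEnd ℂ) (R l a g r) * (starRingEnd ℂ) (R r b d m) =
          ∑ r : Fin N1, (starRingEnd ℂ) (R l b d r) * (starRingEnd ℂ) (R r a g m)) ∧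
     (∀ (l m : Fin N1) (a b g d : Fin N2),
        ∑ r : Fin N1, (starRingEnd ℂ) (R l a g r) * R r b d m =
          ∑ r : Fin N1, R l b d r * (starRingEnd ℂ) (R r a g m)) ∧
     (∀ (l m n r : Fin N1) (a b : Fin N2),
        ∑ g : Fin N2, R l a g n * R m g b r = ∑ g : Fin N2, R m a g r * R l g b n) ∧
     (∀ (l m n r : Fin N1) (a b : Fin N2),
        ∑ g : Fin N2, (starRingEnd ℂ) (R l a g n) * (starRingEnd ℂ) (R m g b r) =
          ∑ g : Fin N2, (starRingEnd ℂ) (R m a g r) * (starRingEnd ℂ) (R l g b n)) ∧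
     (∀ (l m n r : Fin N1) (a b : Fin N2),
        ∑ g : Fin N2, R l a g n * (starRingEnd ℂ) (R m g b r) =
          ∑ g : Fin N2, (starRingEnd ℂ) (R m a g r) * R l g b n)) := by
  rw [yangBaxter_iff_forall_sum_eq]
  constructor
  · intro H
    refine ⟨fun l m a b g d => ?_, fun l m a b g d => ?_, fun l m a b g d => ?_,
      fun l m n r a b => ?_, fun l m n r a b => ?_, fun l m n r a b => ?_⟩
    · simpa [Fintype.sum_sum_type] using H (.inl l, .inr a, .inr b) (.inr d, .inr g, .inl m)
    · simpa [Fintype.sum_sum_type] using H (.inr a, .inr b, .inl l) (.inl m, .inr d, .inr g)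
    · simpa [Fintype.sum_sum_type] using H (.inr a, .inl l, .inr b) (.inr d, .inl m, .inr g)
    · simpa [Fintype.sum_sum_type] using H (.inl l, .inl m, .inr a) (.inr b, .inl r, .inl n)
    · simpa [Fintype.sum_sum_type] using H (.inr a, .inl l, .inl m) (.inl r, .inl n, .inr b)
    · simpa [Fintype.sum_sum_type] using H (.inl l, .inr a, .inl m) (.inl r, .inr b, .inl n)
  · rintro ⟨_, _, _, _, _, _⟩ ⟨p1, p2, p3⟩ ⟨q1, q2, q3⟩
    rcases p1 with a1 | a1 <;> rcases p2 with a2 | a2 <;> rcases p3 with a3 | a3 <;>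
      rcases q1 with b1 | b1 <;> rcases q2 with b2 | b2 <;> rcases q3 with b3 | b3 <;>
      simp [Fintype.sum_sum_type, mul_ite, ite_mul]
    all_goals first | (split_ifs <;> rfl) | apply_assumption
end

section
/- Let R be a complex matrix with entries R^{λα}_{βμ} satisfying the reality condition R̄^{λα}_{βμ} R^{μβ}_{γν} = δ^λ_ν δ^α_γ together with the centrality conditions Σ_λ R^{λγ}_{βν} R^{λβ}_{αμ} = δ^γ_α δ_{μν} and Σ_α R^{λα}_{βρ} R^{ρα}_{γμ} = δ^λ_μ δ_{βγ}. Then R satisfies R^{λβ}_{αμ} = R^{μα}_{βλ} = R̄^{μβ}_{αλ}, i.e. R is invariant under simultaneous transposition of the two upper-lower index pairs and equals the complex conjugate of its full index reversal. -/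
/-!
Read `R^{λα}_{βμ}` as the matrix `M` with row `(λ, α)` and column `(μ, β)`. The reality
condition says that the entrywise conjugate of `M` is a left inverse of `M`, and the two
centrality conditions say that the two partial transposes of `M` (exchanging the `N₁`-indices,
resp. the `N₂`-indices, of row and column) are left inverses of `M` as well. A square matrix has
at most one left inverse, so both partial transposes equal the conjugate of `M`; read entrywise,
these two identities are the claimed symmetries.
-/

open Matrix

namespace Matrix

variable {ι κ α : Type*}

def partialTransposeFst (M : Matrix (ι × κ) (ι × κ) α) : Matrix (ι × κ) (ι × κ) α :=
  fun p q => M (q.1, p.2) (p.1, q.2)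

def partialTransposeSnd (M : Matrix (ι × κ) (ι × κ) α) : Matrix (ι × κ) (ι × κ) α :=
  fun p q => M (p.1, q.2) (q.1, p.2)

variable [DecidableEq ι] [DecidableEq κ]

theorem one_apply_prod [MulZeroOneClass α] (i j : ι) (k l : κ) :
    (1 : Matrix (ι × κ) (ι × κ) α) (i, k) (j, l) =
      (if i = j then 1 else 0) * (if k = l then 1 else 0) := by
  rw [← one_kronecker_one, kronecker_apply, one_apply, one_apply]

variable [Fintype ι] [Fintype κ]

theorem mul_eq_one_of_sum_prod [Semiring α] {A B : Matrix (ι × κ) (ι × κ) α}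
    (h : ∀ (i j : ι) (k l : κ), ∑ x : ι, ∑ y : κ, A (i, k) (x, y) * B (x, y) (j, l) =
      (if i = j then 1 else 0) * (if k = l then 1 else 0)) :
    A * B = 1 := by
  ext ⟨i, k⟩ ⟨j, l⟩
  rw [mul_apply, Fintype.sum_prod_type, h, one_apply_prod]

end Matrix

namespace FourIndexTensor

variable {ι κ : Type*}

def toMatrix (R : ι → κ → κ → ι → ℂ) : Matrix (ι × κ) (ι × κ) ℂ :=
  fun p q => R p.1 p.2 q.2 q.1

variable [Fintype ι] [Fintype κ] [DecidableEq ι] [DecidableEq κ] {R : ι → κ → κ → ι → ℂ}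

theorem map_conj_toMatrix_mul_toMatrix
    (hreal : ∀ (l n : ι) (a g : κ),
      ∑ m : ι, ∑ b : κ, (starRingEnd ℂ) (R l a b m) * R m b g n =
        (if l = n then (1 : ℂ) else 0) * (if a = g then 1 else 0)) :
    (toMatrix R).map (starRingEnd ℂ) * toMatrix R = 1 :=
  mul_eq_one_of_sum_prod hreal

theorem partialTransposeFst_toMatrix_mul_toMatrix
    (hcent1 : ∀ (g a : κ) (m n : ι),
      ∑ l : ι, ∑ b : κ, R l g b n * R l b a m =
        (if g = a then (1 : ℂ) else 0) * (if m = n then 1 else 0)) :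
    (toMatrix R).partialTransposeFst * toMatrix R = 1 :=
  mul_eq_one_of_sum_prod fun n m g a => by
    rw [mul_comm]
    simp only [@eq_comm _ n m]
    exact hcent1 g a m n

theorem partialTransposeSnd_toMatrix_mul_toMatrix
    (hcent2 : ∀ (l m : ι) (b g : κ),
      ∑ a : κ, ∑ r : ι, R l a b r * R r a g m =
        (if l = m then (1 : ℂ) else 0) * (if b = g then 1 else 0)) :
    (toMatrix R).partialTransposeSnd * toMatrix R = 1 :=
  mul_eq_one_of_sum_prod fun l n a g => by
    rw [Finset.sum_comm]
    exact hcent2 l n a g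

end FourIndexTensor

open FourIndexTensor in
/-- The reality condition together with the two centrality conditions imply the symmetry
conditions `R^{λβ}_{αμ} = R^{μα}_{βλ} = conj R^{μβ}_{αλ}`. -/
theorem stmt3 {N1 N2 : ℕ} (R : Fin N1 → Fin N2 → Fin N2 → Fin N1 → ℂ)
    (hreal : ∀ (l n : Fin N1) (a g : Fin N2),
      ∑ m : Fin N1, ∑ b : Fin N2, (starRingEnd ℂ) (R l a b m) * R m b g n =
        (if l = n then (1 : ℂ) else 0) * (if a = g then 1 else 0))
    (hcent1 : ∀ (g a : Fin N2) (m n : Fin N1),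
      ∑ l : Fin N1, ∑ b : Fin N2, R l g b n * R l b a m =
        (if g = a then (1 : ℂ) else 0) * (if m = n then 1 else 0))
    (hcent2 : ∀ (l m : Fin N1) (b g : Fin N2),
      ∑ a : Fin N2, ∑ r : Fin N1, R l a b r * R r a g m =
        (if l = m then (1 : ℂ) else 0) * (if b = g then 1 else 0)) :
    ∀ (l m : Fin N1) (a b : Fin N2),
      R l b a m = R m a b l ∧ R l b a m = (starRingEnd ℂ) (R m b a l) := by
  have hconj := map_conj_toMatrix_mul_toMatrix hreal
  have hFst := left_inv_eq_left_inv (partialTransposeFst_toMatrix_mul_toMatrix hcent1) hconj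
  have hSnd := left_inv_eq_left_inv (partialTransposeSnd_toMatrix_mul_toMatrix hcent2) hconj
  have swapFst (l m : Fin N1) (a b : Fin N2) : R m a b l = (starRingEnd ℂ) (R l a b m) :=
    congrFun (congrFun hFst (l, a)) (m, b)
  have swapSnd (l m : Fin N1) (a b : Fin N2) : R l b a m = (starRingEnd ℂ) (R l a b m) :=
    congrFun (congrFun hSnd (l, a)) (m, b)
  intro l m a b
  have hswap : R l b a m = R m a b l := (swapSnd l m a b).trans (swapFst l m a b).symm
  exact ⟨hswap, by rw [swapSnd m l a b, Complex.conj_conj, hswap]⟩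
end

section
/- Let A, C be complex N₁×N₁ matrices and B, D complex N₂×N₂ matrices, and define R^{λα}_{βμ} = A^λ_μ B^α_β + i C^λ_μ D^α_β. Then R satisfies the two Yang–Baxter-type conditions Σ_ρ R^{λα}_{βρ} R^{ρδ}_{γμ} = Σ_ρ R^{λδ}_{γρ} R^{ρα}_{βμ} and Σ_γ R^{λα}_{γν} R^{μγ}_{βρ} = Σ_γ R^{μα}_{γρ} R^{λγ}_{βν} for all indices if and only if [A,C] = 0 and [B,D] = 0, provided the pairs (B,D) and (A,C) are each linearly independent. -/
/-!
Both sides of each condition are bilinear in `A ⊗ B + i C ⊗ D`; the `A ⊗ A`- and `C ⊗ C`-terms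
cancel in the difference, which factors as `i` times an entry of one commutator times a
`2 × 2` minor of the other pair. Linear independence of a pair is exactly the non-vanishing of
some such minor, so each condition is equivalent to the vanishing of one commutator.
-/

open Complex

section LinearIndependence

variable {K m n : Type*} [Field K]

theorem Matrix.exists_mul_ne_mul_of_linearIndependent_pair {X Y : Matrix m n K}
    (h : LinearIndependent K ![X, Y]) : ∃ i j k l, X i j * Y k l ≠ Y i j * X k l := by
  by_contra! hXY
  rw [LinearIndependent.pair_iff] at h
  have hX : X = 0 := by
    ext i j
    refine (h (Y i j) (-X i j) ?_).2 |> neg_eq_zero.mp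
    ext k l
    simp only [Matrix.add_apply, Matrix.smul_apply, smul_eq_mul, Matrix.zero_apply]
    linear_combination -(hXY i j k l)
  exact one_ne_zero (h 1 0 (by simp [hX])).1

end LinearIndependence

section YangBaxterR

variable {S ι κ : Type*} [CommRing S]

/-- The paper's `R^{λα}_{βμ}`, with `i` generalized to `z`, is `yangBaxterR z A C B D λ α β μ`. -/
def yangBaxterR (z : S) (A C : Matrix ι ι S) (B D : Matrix κ κ S) (l : ι) (a b : κ) (m : ι) :
    S :=
  A l m * B a b + z * (C l m * D a b)

variable (z : S) (A C : Matrix ι ι S) (B D : Matrix κ κ S)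

theorem yangBaxterR_first_sub_eq [Fintype ι] (l m : ι) (a b g d : κ) :
    ∑ r, yangBaxterR z A C B D l a b r * yangBaxterR z A C B D r d g m
      - ∑ r, yangBaxterR z A C B D l d g r * yangBaxterR z A C B D r a b m
      = z * (A * C - C * A) l m * (B a b * D d g - D a b * B d g) := by
  simp only [yangBaxterR, Matrix.sub_apply, Matrix.mul_apply, ← Finset.sum_sub_distrib,
    Finset.sum_mul, Finset.mul_sum]
  exact Finset.sum_congr rfl fun r _ => by ring

theorem yangBaxterR_second_sub_eq [Fintype κ] (l m n r : ι) (a b : κ) :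
    ∑ g, yangBaxterR z A C B D l a g n * yangBaxterR z A C B D m g b r
      - ∑ g, yangBaxterR z A C B D m a g r * yangBaxterR z A C B D l g b n
      = z * (A l n * C m r - C l n * A m r) * (B * D - D * B) a b := by
  simp only [yangBaxterR, Matrix.sub_apply, Matrix.mul_apply, ← Finset.sum_sub_distrib,
    Finset.mul_sum]
  exact Finset.sum_congr rfl fun g _ => by ring

end YangBaxterR

section Field

variable {K ι κ : Type*} [Field K]
  {z : K} {A C : Matrix ι ι K} {B D : Matrix κ κ K}

theorem yangBaxterR_first_iff [Fintype ι] (hz : z ≠ 0) (hBD : LinearIndependent K ![B, D]) :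
    (∀ (l m : ι) (a b g d : κ),
        ∑ r, yangBaxterR z A C B D l a b r * yangBaxterR z A C B D r d g m
          = ∑ r, yangBaxterR z A C B D l d g r * yangBaxterR z A C B D r a b m) ↔
      A * C - C * A = 0 := by
  simp only [← sub_eq_zero (a := ∑ r, _), yangBaxterR_first_sub_eq]
  refine ⟨fun h => ?_, fun h _ _ _ _ _ _ => by rw [h]; simp⟩
  obtain ⟨a, b, d, g, hminor⟩ := Matrix.exists_mul_ne_mul_of_linearIndependent_pair hBD
  ext l m
  simpa [hz, sub_eq_zero, hminor] using h l m a b g d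

theorem yangBaxterR_second_iff [Fintype κ] (hz : z ≠ 0) (hAC : LinearIndependent K ![A, C]) :
    (∀ (l m n r : ι) (a b : κ),
        ∑ g, yangBaxterR z A C B D l a g n * yangBaxterR z A C B D m g b r
          = ∑ g, yangBaxterR z A C B D m a g r * yangBaxterR z A C B D l g b n) ↔
      B * D - D * B = 0 := by
  simp only [← sub_eq_zero (a := ∑ g, _), yangBaxterR_second_sub_eq]
  refine ⟨fun h => ?_, fun h _ _ _ _ _ _ => by rw [h]; simp⟩
  obtain ⟨l, n, m, r, hminor⟩ := Matrix.exists_mul_ne_mul_of_linearIndependent_pair hAC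
  ext a b
  simpa [hz, sub_eq_zero, hminor] using h l m n r a b

end Field

/-- For `R^{λα}_{βμ} = A^λ_μ B^α_β + i C^λ_μ D^α_β`, the two Yang–Baxter-type conditions
hold if and only if `[A,C] = 0` and `[B,D] = 0`, provided the pairs `(A,C)` and `(B,D)`
are each linearly independent. -/
theorem stmt4 {N1 N2 : ℕ}
    (A C : Matrix (Fin N1) (Fin N1) ℂ) (B D : Matrix (Fin N2) (Fin N2) ℂ)
    (hAC : LinearIndependent ℂ ![A, C]) (hBD : LinearIndependent ℂ ![B, D])
    (R : Fin N1 → Fin N2 → Fin N2 → Fin N1 → ℂ)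
    (hR : ∀ l a b m, R l a b m = A l m * B a b + Complex.I * (C l m * D a b)) :
    ((∀ (l m : Fin N1) (a b g d : Fin N2),
        ∑ r : Fin N1, R l a b r * R r d g m = ∑ r : Fin N1, R l d g r * R r a b m) ∧
     (∀ (l m n r : Fin N1) (a b : Fin N2),
        ∑ g : Fin N2, R l a g n * R m g b r = ∑ g : Fin N2, R m a g r * R l g b n)) ↔
    (A * C - C * A = 0 ∧ B * D - D * B = 0) := by
  obtain rfl : R = yangBaxterR Complex.I A C B D := by
    funext l a b m
    exact hR l a b m
  exact and_congr (yangBaxterR_first_iff I_ne_zero hBD) (yangBaxterR_second_iff I_ne_zero hAC)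
end

section
/- Let A, C be commuting real N₁×N₁ matrices with A symmetric and C antisymmetric, and let B, D be commuting real N₂×N₂ matrices with B symmetric and D antisymmetric. Assume A²⊗B² + C²⊗D² = 1⊗1. Then the matrix R^{λα}_{βμ} = A^λ_μ B^α_β + i C^λ_μ D^α_β satisfies: (a) the reality condition Σ_{μ,β} R̄^{λα}_{βμ} R^{μβ}_{γν} = δ^λ_ν δ^α_γ; (b) the symmetry condition R^{λβ}_{αμ} = R^{μα}_{βλ} = R̄^{μβ}_{αλ}; (c) both Yang–Baxter-type conditions Σ_ρ R^{λα}_{βρ} R^{ρδ}_{γμ} = Σ_ρ R^{λδ}_{γρ} R^{ρα}_{βμ} and Σ_γ R^{λα}_{γν} R^{μγ}_{βρ} = Σ_γ R^{μα}_{γρ} R^{λγ}_{βν}. -/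
open Complex Matrix
open scoped Kronecker

/-!
Index `R` by the pairs `(λ, α)` and `(μ, β)`: it becomes the complex matrix `X + iY` with
`X = A ⊗ B` and `Y = C ⊗ D` real and commuting, and `R̄ = X - iY`. The reality condition is then
`(X - iY)(X + iY) = X² + Y² = A² ⊗ B² + C² ⊗ D² = 1`. With `α, β` fixed, `R` is the complex
combination `B_{αβ} A + i D_{αβ} C` of the commuting matrices `A, C`, so any two such slices
commute, which is the first Yang–Baxter-type condition; slicing at fixed `λ, μ` instead gives
combinations of `B, D` and the second. The symmetry conditions hold entrywise.
-/

variable {m n : Type*}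

def abcdAnsatz (A C : Matrix m m ℝ) (B D : Matrix n n ℝ) (l : m) (a b : n) (k : m) : ℂ :=
  A l k * B a b + I * (C l k * D a b)

theorem Matrix.map_ofReal_mul {p q r : Type*} [Fintype q] (M : Matrix p q ℝ) (N : Matrix q r ℝ) :
    (M * N).map ofReal = M.map ofReal * N.map ofReal :=
  Matrix.map_mul (f := ofRealHom)

theorem Commute.map_ofReal [Fintype m] {A C : Matrix m m ℝ} (h : Commute A C) :
    Commute (A.map ofReal) (C.map ofReal) := by
  simp only [Commute, SemiconjBy, ← Matrix.map_ofReal_mul, h.eq]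

theorem Commute.kronecker {α : Type*} [CommSemiring α] [Fintype m] [Fintype n]
    {A C : Matrix m m α} {B D : Matrix n n α}
    (hAC : Commute A C) (hBD : Commute B D) : Commute (A ⊗ₖ B) (C ⊗ₖ D) := by
  simp only [Commute, SemiconjBy, ← mul_kronecker_mul, hAC.eq, hBD.eq]

theorem Commute.sub_I_smul_mul_add_I_smul {R : Type*} [NonUnitalRing R] [Module ℂ R]
    [IsScalarTower ℂ R R] [SMulCommClass ℂ R R] {X Y : R} (h : Commute X Y) :
    (X - I • Y) * (X + I • Y) = X * X + Y * Y := by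
  simp only [sub_mul, mul_add, smul_mul_assoc, mul_smul_comm, h.eq]
  match_scalars <;> simp

theorem Commute.smul_add_smul {R S : Type*} [NonUnitalNonAssocSemiring R] [SMul S R]
    [IsScalarTower S R R] [SMulCommClass S R R] {X Y : R}
    (h : Commute X Y) (a b c d : S) : Commute (a • X + b • Y) (c • X + d • Y) :=
  (((Commute.refl X).smul_left a).smul_right c |>.add_right ((h.smul_left a).smul_right d)).add_left
    ((h.symm.smul_left b |>.smul_right c).add_right (((Commute.refl Y).smul_left b).smul_right d))

section abcdAnsatz

variable {A C : Matrix m m ℝ} {B D : Matrix n n ℝ}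

theorem conj_abcdAnsatz (l : m) (a b : n) (k : m) :
    starRingEnd ℂ (abcdAnsatz A C B D l a b k) = abcdAnsatz A (-C) B D l a b k := by
  simp only [abcdAnsatz, map_add, map_mul, conj_ofReal, conj_I, Matrix.neg_apply, ofReal_neg]
  ring

theorem abcdAnsatz_eq_kronecker (l : m) (a b : n) (k : m) :
    abcdAnsatz A C B D l a b k =
      ((A ⊗ₖ B).map ofReal + I • (C ⊗ₖ D).map ofReal) (l, a) (k, b) := by
  simp [abcdAnsatz]

theorem conj_abcdAnsatz_eq_kronecker (l : m) (a b : n) (k : m) :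
    starRingEnd ℂ (abcdAnsatz A C B D l a b k) =
      ((A ⊗ₖ B).map ofReal - I • (C ⊗ₖ D).map ofReal) (l, a) (k, b) := by
  simp [abcdAnsatz]
  ring

theorem sum_conj_abcdAnsatz_mul_abcdAnsatz [Fintype m] [Fintype n] [DecidableEq m]
    [DecidableEq n] (hAC : Commute A C) (hBD : Commute B D)
    (hsq : (A * A) ⊗ₖ (B * B) + (C * C) ⊗ₖ (D * D) = 1) (l k : m) (a b : n) :
    ∑ j : m, ∑ c : n, starRingEnd ℂ (abcdAnsatz A C B D l a c j) * abcdAnsatz A C B D j c b k =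
      (if l = k then 1 else 0) * (if a = b then 1 else 0) := by
  have hsq' : (A ⊗ₖ B).map ofReal * (A ⊗ₖ B).map ofReal +
      (C ⊗ₖ D).map ofReal * (C ⊗ₖ D).map ofReal = (1 : Matrix (m × n) (m × n) ℂ) := by
    rw [← map_ofReal_mul, ← map_ofReal_mul, ← mul_kronecker_mul, ← mul_kronecker_mul,
      ← Matrix.map_add _ ofReal_add, hsq, Matrix.map_one _ ofReal_zero ofReal_one]
  calc _ = (((A ⊗ₖ B).map ofReal - I • (C ⊗ₖ D).map ofReal) *
          ((A ⊗ₖ B).map ofReal + I • (C ⊗ₖ D).map ofReal)) (l, a) (k, b) := by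
        simp only [mul_apply, Fintype.sum_prod_type, conj_abcdAnsatz_eq_kronecker]
        simp only [abcdAnsatz_eq_kronecker]
    _ = ((1 : Matrix m m ℂ) ⊗ₖ (1 : Matrix n n ℂ)) (l, a) (k, b) := by
        rw [(hAC.kronecker hBD).map_ofReal.sub_I_smul_mul_add_I_smul, hsq', one_kronecker_one]
    _ = _ := by simp only [kronecker_apply, one_apply]

theorem abcdAnsatz_swap (hA : Aᵀ = A) (hB : Bᵀ = B) (hC : Cᵀ = -C) (hD : Dᵀ = -D)
    (l k : m) (a b : n) :
    abcdAnsatz A C B D l b a k = abcdAnsatz A C B D k a b l := by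
  have hCkl : C k l = -C l k := congrFun₂ hC l k
  have hDab : D a b = -D b a := congrFun₂ hD b a
  simp only [abcdAnsatz, IsSymm.apply hA l k, IsSymm.apply hB a b, hCkl, hDab, ofReal_neg]
  ring

theorem abcdAnsatz_eq_conj (hA : Aᵀ = A) (hC : Cᵀ = -C) (l k : m) (a b : n) :
    abcdAnsatz A C B D l a b k = starRingEnd ℂ (abcdAnsatz A C B D k a b l) := by
  have hCkl : C k l = -C l k := congrFun₂ hC l k
  rw [conj_abcdAnsatz]
  simp only [abcdAnsatz, IsSymm.apply hA l k, Matrix.neg_apply, hCkl, neg_neg]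

theorem sum_abcdAnsatz_mul_comm_of_commute_left [Fintype m] (hAC : Commute A C) (l k : m)
    (a b c d : n) :
    ∑ j : m, abcdAnsatz A C B D l a b j * abcdAnsatz A C B D j c d k =
      ∑ j : m, abcdAnsatz A C B D l c d j * abcdAnsatz A C B D j a b k := by
  have slice : ∀ a b : n, of (fun l k => abcdAnsatz A C B D l a b k) =
      (B a b : ℂ) • A.map ofReal + (I * D a b) • C.map ofReal := by
    intro a b; ext l k
    simp only [of_apply, abcdAnsatz, Matrix.add_apply, Matrix.smul_apply, map_apply, smul_eq_mul]
    ring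
  have := hAC.map_ofReal.smul_add_smul (B a b : ℂ) (I * D a b) (B c d) (I * D c d)
  simpa only [← slice, mul_apply, of_apply] using congrFun₂ this.eq l k

theorem sum_abcdAnsatz_mul_comm_of_commute_right [Fintype n] (hBD : Commute B D)
    (l k l' k' : m) (a b : n) :
    ∑ c : n, abcdAnsatz A C B D l a c k * abcdAnsatz A C B D l' c b k' =
      ∑ c : n, abcdAnsatz A C B D l' a c k' * abcdAnsatz A C B D l c b k := by
  have slice : ∀ l k : m, of (fun a b => abcdAnsatz A C B D l a b k) =
      (A l k : ℂ) • B.map ofReal + (I * C l k) • D.map ofReal := by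
    intro l k; ext a b
    simp only [of_apply, abcdAnsatz, Matrix.add_apply, Matrix.smul_apply, map_apply, smul_eq_mul]
    ring
  have := hBD.map_ofReal.smul_add_smul (A l k : ℂ) (I * C l k) (A l' k') (I * C l' k')
  simpa only [← slice, mul_apply, of_apply] using congrFun₂ this.eq a b

end abcdAnsatz

/-- Proposition on the ansatz ABCD: for commuting real matrices with `A,B` symmetric and
`C,D` antisymmetric satisfying `A²⊗B² + C²⊗D² = 1⊗1`, the matrix
`R^{λα}_{βμ} = A^λ_μ B^α_β + i C^λ_μ D^α_β` satisfies the reality condition, the symmetry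
conditions, and both Yang–Baxter-type conditions. -/
theorem stmt5 {N1 N2 : ℕ}
    (A C : Matrix (Fin N1) (Fin N1) ℝ) (B D : Matrix (Fin N2) (Fin N2) ℝ)
    (hAC : A * C = C * A) (hBD : B * D = D * B)
    (hA : Aᵀ = A) (hB : Bᵀ = B) (hC : Cᵀ = -C) (hD : Dᵀ = -D)
    (hcent : ∀ (l m : Fin N1) (a b : Fin N2),
      (A * A) l m * (B * B) a b + (C * C) l m * (D * D) a b =
        (if l = m then (1 : ℝ) else 0) * (if a = b then 1 else 0))
    (R : Fin N1 → Fin N2 → Fin N2 → Fin N1 → ℂ)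
    (hR : ∀ l a b m, R l a b m = (A l m : ℂ) * (B a b : ℂ) +
      Complex.I * ((C l m : ℂ) * (D a b : ℂ))) :
    -- (a) reality condition
    ((∀ (l n : Fin N1) (a g : Fin N2),
        ∑ m : Fin N1, ∑ b : Fin N2, (starRingEnd ℂ) (R l a b m) * R m b g n =
          (if l = n then (1 : ℂ) else 0) * (if a = g then 1 else 0)) ∧
     -- (b) symmetry conditions
     (∀ (l m : Fin N1) (a b : Fin N2),
        R l b a m = R m a b l ∧ R l b a m = (starRingEnd ℂ) (R m b a l)) ∧
     -- (c) Yang–Baxter-type conditions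
     (∀ (l m : Fin N1) (a b g d : Fin N2),
        ∑ r : Fin N1, R l a b r * R r d g m = ∑ r : Fin N1, R l d g r * R r a b m) ∧
     (∀ (l m n r : Fin N1) (a b : Fin N2),
        ∑ g : Fin N2, R l a g n * R m g b r = ∑ g : Fin N2, R m a g r * R l g b n)) := by
  obtain rfl : R = abcdAnsatz A C B D := by
    funext l a b k
    exact hR l a b k
  have hsq : (A * A) ⊗ₖ (B * B) + (C * C) ⊗ₖ (D * D) = 1 := by
    rw [← one_kronecker_one]
    ext ⟨l, a⟩ ⟨k, b⟩
    simpa only [Matrix.add_apply, kronecker_apply, one_apply] using hcent l k a b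
  exact ⟨sum_conj_abcdAnsatz_mul_abcdAnsatz hAC hBD hsq,
    fun l k a b => ⟨abcdAnsatz_swap hA hB hC hD l k a b, abcdAnsatz_eq_conj hA hC l k b a⟩,
    fun l k a b c d => sum_abcdAnsatz_mul_comm_of_commute_left hAC l k a b d c,
    fun l m n r a b => sum_abcdAnsatz_mul_comm_of_commute_right hBD l n m r a b⟩
end

section
/- Let n̂ ∈ ℝ³ be a unit vector and u, v ∈ ℝ with u² + v² = 1. Then the 4×4-block matrix R^{λα}_{βμ} = u δ^λ_μ δ^α_β + i v (J^+_{n̂})^λ_μ (J^-_{n̂})^α_β (indices in {0,1,2,3}) satisfies the reality condition Σ_{μ,β} R̄^{λα}_{βμ} R^{μβ}_{γν} = δ^λ_ν δ^α_γ, the symmetry conditions R^{λβ}_{αμ} = R^{μα}_{βλ} = R̄^{μβ}_{αλ}, and the Yang–Baxter-type conditions Σ_ρ R^{λα}_{βρ} R^{ρδ}_{γμ} = Σ_ρ R^{λδ}_{γρ} R^{ρα}_{βμ} and Σ_γ R^{λα}_{γν} R^{μγ}_{βρ} = Σ_γ R^{μα}_{γρ} R^{λγ}_{βν}. -/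
/-!
Write `P = J⁺_n̂` and `M = J⁻_n̂`. Both are real antisymmetric matrices with square `-1`, and
`R^{λα}_{βμ} = u δ^λ_μ δ^α_β + i v P^λ_μ M^α_β`; nothing else about them is used.

Read as a matrix with rows `(λ, α)` and columns `(μ, β)`, `R = u + i v (P ⊗ M)` with
`(P ⊗ M)² = P² ⊗ M² = 1`, so `R̄ R = u² + v² = 1`: this is the reality condition. For the
Yang–Baxter-type conditions, fix the pair `(α, β)` (resp. `(λ, μ)`): the slice of `R` is
`u δ^α_β + i v M^α_β P` (resp. `u δ^λ_μ + i v P^λ_μ M`), and all these slices lie in the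
commutative algebra spanned by `1` and `P` (resp. `M`).
-/

/-- The Levi-Civita symbol on {1,2,3} (indexed by `Fin 3`), with ε₁₂₃ = 1. -/
def eps (a b c : Fin 3) : ℝ :=
  if (a, b, c) = (0, 1, 2) ∨ (a, b, c) = (1, 2, 0) ∨ (a, b, c) = (2, 0, 1) then 1
  else if (a, b, c) = (0, 2, 1) ∨ (a, b, c) = (2, 1, 0) ∨ (a, b, c) = (1, 0, 2) then -1
  else 0

/-- The quaternionic 4×4 matrices: `Jmat (-1) a = J⁺_a` and `Jmat 1 a = J⁻_a`, with
`(J^±_a)_{μν} = ∓(δ_{0μ}δ_{aν} − δ_{aμ}δ_{0ν}) + Σ_{b,c} ε_{abc} δ_{bμ} δ_{cν}`. -/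
def Jmat (s : ℝ) (a : Fin 3) : Matrix (Fin 4) (Fin 4) ℝ :=
  fun μ ν =>
    s * ((if μ = 0 then (1 : ℝ) else 0) * (if ν = a.succ then 1 else 0)
        - (if μ = a.succ then (1 : ℝ) else 0) * (if ν = 0 then 1 else 0))
    + ∑ b : Fin 3, ∑ c : Fin 3,
        eps a b c * (if μ = b.succ then (1 : ℝ) else 0) * (if ν = c.succ then 1 else 0)

open Complex
open Matrix
open scoped Kronecker

theorem commute_smul_one_add_smul {S A : Type*} [CommSemiring S] [Semiring A] [Algebra S A]
    (X : A) (a b c d : S) : Commute (a • 1 + b • X) (c • 1 + d • X) :=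
  have hX : Commute X (c • 1 + d • X) :=
    ((Commute.one_right X).smul_right c).add_right ((Commute.refl X).smul_right d)
  ((Commute.one_left _).smul_left a).add_left (hX.smul_left b)

theorem kronecker_mul_self_eq_one {ι α : Type*} [Fintype ι] [DecidableEq ι] [CommRing α]
    {P M : Matrix ι ι α} (hP : P * P = -1) (hM : M * M = -1) : (P ⊗ₖ M) * (P ⊗ₖ M) = 1 := by
  rw [← mul_kronecker_mul, hP, hM, ← neg_one_smul α (1 : Matrix ι ι α), smul_kronecker,
    kronecker_smul, one_kronecker_one, smul_smul, neg_one_mul, neg_neg, one_smul]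

section Toric

variable {ι : Type*} [DecidableEq ι]

def toricR (u v : ℝ) (P M : Matrix ι ι ℝ) (l a b m : ι) : ℂ :=
  (u : ℂ) * ((if l = m then (1 : ℂ) else 0) * (if a = b then 1 else 0)) +
    I * (v : ℂ) * ((P l m * M a b : ℝ) : ℂ)

noncomputable def toricMatrix (u v : ℝ) (P M : Matrix ι ι ℝ) : Matrix (ι × ι) (ι × ι) ℂ :=
  (u : ℂ) • 1 + (I * v) • (P ⊗ₖ M).map (algebraMap ℝ ℂ)

variable {u v : ℝ} {P M : Matrix ι ι ℝ}

theorem toricMatrix_apply (l a m b : ι) :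
    toricMatrix u v P M (l, a) (m, b) = toricR u v P M l a b m := by
  simp only [toricMatrix, toricR, Matrix.add_apply, Matrix.smul_apply, one_apply, Prod.mk.injEq,
    map_apply, kronecker_apply, ite_zero_mul_ite_zero, smul_eq_mul, mul_one,
    Complex.coe_algebraMap]

theorem conj_toricR (l a b m : ι) :
    starRingEnd ℂ (toricR u v P M l a b m) = toricR u (-v) P M l a b m := by
  simp [toricR, apply_ite (starRingEnd ℂ)]

theorem toricR_swap (hP : Pᵀ = -P) (hM : Mᵀ = -M) (l m a b : ι) :
    toricR u v P M l b a m = toricR u v P M m a b l := by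
  have hPlm : P m l = -P l m := by rw [← transpose_apply P, hP, Matrix.neg_apply]
  have hMba : M b a = -M a b := by rw [← transpose_apply M, hM, Matrix.neg_apply]
  simp only [toricR, hPlm, hMba, eq_comm]
  push_cast
  ring

theorem toricR_eq_conj_swap (hP : Pᵀ = -P) (l m a b : ι) :
    toricR u v P M l b a m = starRingEnd ℂ (toricR u v P M m b a l) := by
  have hPlm : P m l = -P l m := by rw [← transpose_apply P, hP, Matrix.neg_apply]
  rw [conj_toricR]
  simp only [toricR, hPlm, eq_comm]
  push_cast
  ring

theorem of_toricR_outer (a b : ι) :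
    of (fun l m => toricR u v P M l a b m) =
      ((u : ℂ) * if a = b then 1 else 0) • 1 + (I * v * M a b) • P.map (↑) := by
  ext l m
  simp only [toricR, of_apply, Matrix.add_apply, Matrix.smul_apply, one_apply, map_apply,
    smul_eq_mul]
  push_cast
  ring

theorem of_toricR_inner (l m : ι) :
    of (fun a b => toricR u v P M l a b m) =
      ((u : ℂ) * if l = m then 1 else 0) • 1 + (I * v * P l m) • M.map (↑) := by
  ext a b
  simp only [toricR, of_apply, Matrix.add_apply, Matrix.smul_apply, one_apply, map_apply,
    smul_eq_mul]
  push_cast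
  ring

variable [Fintype ι]

theorem toricR_yangBaxter_outer (l m a b g d : ι) :
    ∑ r, toricR u v P M l a b r * toricR u v P M r d g m =
      ∑ r, toricR u v P M l d g r * toricR u v P M r a b m := by
  have h : of (fun l m => toricR u v P M l a b m) * of (fun l m => toricR u v P M l d g m) =
      of (fun l m => toricR u v P M l d g m) * of (fun l m => toricR u v P M l a b m) := by
    rw [of_toricR_outer, of_toricR_outer]
    exact (commute_smul_one_add_smul _ _ _ _ _).eq
  simpa [mul_apply] using congrFun (congrFun h l) m

theorem toricR_yangBaxter_inner (l m n r a b : ι) :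
    ∑ g, toricR u v P M l a g n * toricR u v P M m g b r =
      ∑ g, toricR u v P M m a g r * toricR u v P M l g b n := by
  have h : of (fun a b => toricR u v P M l a b n) * of (fun a b => toricR u v P M m a b r) =
      of (fun a b => toricR u v P M m a b r) * of (fun a b => toricR u v P M l a b n) := by
    rw [of_toricR_inner, of_toricR_inner]
    exact (commute_smul_one_add_smul _ _ _ _ _).eq
  simpa [mul_apply] using congrFun (congrFun h a) b

theorem toricMatrix_neg_mul_toricMatrix (hP : P * P = -1) (hM : M * M = -1)
    (huv : u ^ 2 + v ^ 2 = 1) : toricMatrix u (-v) P M * toricMatrix u v P M = 1 := by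
  have hK : (P ⊗ₖ M).map (algebraMap ℝ ℂ) * (P ⊗ₖ M).map (algebraMap ℝ ℂ) = 1 := by
    rw [← Matrix.map_mul, kronecker_mul_self_eq_one hP hM,
      Matrix.map_one _ (map_zero _) (map_one _)]
  have hcoef : (u : ℂ) * u + I * ↑(-v) * (I * v) = 1 := by
    have huvC : (u : ℂ) ^ 2 + (v : ℂ) ^ 2 = 1 := by exact_mod_cast huv
    push_cast
    linear_combination huvC - (v : ℂ) ^ 2 * I_mul_I
  simp only [toricMatrix, add_mul, mul_add, smul_mul_smul, hK, one_mul, mul_one]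
  linear_combination (norm := module) hcoef • (1 : Matrix (ι × ι) (ι × ι) ℂ)

theorem toricR_reality (hP : P * P = -1) (hM : M * M = -1) (huv : u ^ 2 + v ^ 2 = 1)
    (l n a g : ι) :
    ∑ m, ∑ b, starRingEnd ℂ (toricR u v P M l a b m) * toricR u v P M m b g n =
      (if l = n then (1 : ℂ) else 0) * (if a = g then 1 else 0) := by
  have h := congrFun (congrFun (toricMatrix_neg_mul_toricMatrix hP hM huv) (l, a)) (n, g)
  simp only [mul_apply, Fintype.sum_prod_type, toricMatrix_apply, one_apply, Prod.mk.injEq] at h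
  simpa only [conj_toricR, ite_zero_mul_ite_zero, mul_one] using h

end Toric

theorem eps_swap (a b c : Fin 3) : eps a c b = -eps a b c := by
  fin_cases a <;> fin_cases b <;> fin_cases c <;> simp +decide [eps]

theorem Jmat_transpose (s : ℝ) (a : Fin 3) : (Jmat s a)ᵀ = -Jmat s a := by
  ext μ ν
  simp only [transpose_apply, Matrix.neg_apply, Jmat]
  have hε : ∑ b, ∑ c, eps a b c * (if ν = b.succ then (1 : ℝ) else 0) *
        (if μ = c.succ then 1 else 0) =
      -∑ b, ∑ c, eps a b c * (if μ = b.succ then (1 : ℝ) else 0) *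
        (if ν = c.succ then 1 else 0) := by
    rw [Finset.sum_comm, ← Finset.sum_neg_distrib]
    refine Finset.sum_congr rfl fun b _ => ?_
    rw [← Finset.sum_neg_distrib]
    refine Finset.sum_congr rfl fun c _ => ?_
    rw [eps_swap]
    ring
  rw [hε]
  ring

theorem transpose_sum_smul_Jmat (s : ℝ) (n : Fin 3 → ℝ) :
    (∑ c, n c • Jmat s c)ᵀ = -∑ c, n c • Jmat s c := by
  rw [transpose_sum, ← Finset.sum_neg_distrib]
  refine Finset.sum_congr rfl fun c _ => ?_
  rw [transpose_smul, Jmat_transpose, smul_neg]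

theorem sum_smul_Jmat (s : ℝ) (n : Fin 3 → ℝ) :
    ∑ c, n c • Jmat s c =
      !![0, s * n 0, s * n 1, s * n 2;
         -(s * n 0), 0, n 2, -n 1;
         -(s * n 1), -n 2, 0, n 0;
         -(s * n 2), n 1, -n 0, 0] := by
  ext μ ν
  fin_cases μ <;> fin_cases ν <;> simp +decide [Jmat, eps, Fin.sum_univ_three] <;> ring

theorem sum_smul_Jmat_mul_self {s : ℝ} (hs : s ^ 2 = 1) {n : Fin 3 → ℝ}
    (hn : ∑ a, n a ^ 2 = 1) :
    (∑ c, n c • Jmat s c) * (∑ c, n c • Jmat s c) = -1 := by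
  rw [Fin.sum_univ_three] at hn
  rw [sum_smul_Jmat]
  ext i j
  fin_cases i <;> fin_cases j <;> simp [mul_apply, Fin.sum_univ_four] <;> grind

/-- The toric family `R^{λα}_{βμ} = u δ^λ_μ δ^α_β + i v (J⁺_n̂)^λ_μ (J⁻_n̂)^α_β` with
`u² + v² = 1` and `n̂` a unit vector satisfies the reality, symmetry, and
Yang–Baxter-type conditions. -/
theorem stmt10 (n : Fin 3 → ℝ) (hn : ∑ a : Fin 3, n a ^ 2 = 1)
    (u v : ℝ) (huv : u ^ 2 + v ^ 2 = 1)
    (R : Fin 4 → Fin 4 → Fin 4 → Fin 4 → ℂ)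
    (hR : ∀ l a b m, R l a b m =
      (u : ℂ) * ((if l = m then (1 : ℂ) else 0) * (if a = b then 1 else 0)) +
      Complex.I * (v : ℂ) *
        (((∑ c : Fin 3, n c • Jmat (-1) c) l m : ℝ) *
         ((∑ c : Fin 3, n c • Jmat 1 c) a b : ℝ) : ℝ)) :
    -- reality condition
    ((∀ (l n' : Fin 4) (a g : Fin 4),
        ∑ m : Fin 4, ∑ b : Fin 4, (starRingEnd ℂ) (R l a b m) * R m b g n' =
          (if l = n' then (1 : ℂ) else 0) * (if a = g then 1 else 0)) ∧
     -- symmetry conditions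
     (∀ (l m a b : Fin 4),
        R l b a m = R m a b l ∧ R l b a m = (starRingEnd ℂ) (R m b a l)) ∧
     -- Yang–Baxter-type conditions
     (∀ (l m a b g d : Fin 4),
        ∑ r : Fin 4, R l a b r * R r d g m = ∑ r : Fin 4, R l d g r * R r a b m) ∧
     (∀ (l m n' r a b : Fin 4),
        ∑ g : Fin 4, R l a g n' * R m g b r = ∑ g : Fin 4, R m a g r * R l g b n')) := by
  set P := ∑ c : Fin 3, n c • Jmat (-1) c
  set M := ∑ c : Fin 3, n c • Jmat 1 c
  obtain rfl : R = toricR u v P M := by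
    funext l a b m
    exact hR l a b m
  have hP : Pᵀ = -P := transpose_sum_smul_Jmat _ n
  have hM : Mᵀ = -M := transpose_sum_smul_Jmat _ n
  have hP2 : P * P = -1 := sum_smul_Jmat_mul_self (by norm_num) hn
  have hM2 : M * M = -1 := sum_smul_Jmat_mul_self (by norm_num) hn
  exact ⟨toricR_reality hP2 hM2 huv,
    fun l m a b => ⟨toricR_swap hP hM l m a b, toricR_eq_conj_swap hP l m a b⟩,
    toricR_yangBaxter_outer, toricR_yangBaxter_inner⟩
end

section
/- Let n̂₁, n̂₂ ∈ ℝ³ be orthonormal vectors, u⁰, u¹, u² ∈ ℝ with (u⁰)² + (u¹)² + (u²)² = 1, and set ū = u¹ n̂₁ + u² n̂₂. Then the matrix R^{λα}_{βμ} = u⁰ δ^λ_μ δ^α_β + i (J^+_{n̂₁})^λ_μ (J^+_{ū})^α_β satisfies the reality condition Σ_{μ,β} R̄^{λα}_{βμ} R^{μβ}_{γν} = δ^λ_ν δ^α_γ and the centrality conditions Σ_λ R^{λγ}_{βν} R^{λβ}_{αμ} = δ^γ_α δ_{μν} and Σ_α R^{λα}_{βρ} R^{ρα}_{γμ} = δ^λ_μ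 δ_{βγ}. -/
/-!
Read `R` as the operator `u⁰ 1 + i K` on `ℝ⁴ ⊗ ℝ⁴`, with `K = J⁺_{n̂₁} ⊗ J⁺_ū`. Since
`(J⁺_w)² = -‖w‖²`, we get `K² = ‖ū‖² = (u¹)² + (u²)² = 1 - (u⁰)²`, so `u⁰ 1 - i K` is
the inverse of `R`. Complex conjugation turns `R` into `u⁰ 1 - i K` because `K` is real,
and so does transposing either tensor factor because the `J⁺_w` are antisymmetric; the
reality condition and the two centrality conditions are thus three readings of
`(u⁰ 1 - i K)(u⁰ 1 + i K) = 1`.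
-/

open Complex ComplexConjugate Matrix Kronecker

theorem smul_one_sub_I_smul_mul_smul_one_add_I_smul {S : Type*} [Ring S] [Algebra ℂ S]
    (c : ℂ) (K : S) (hK : K * K = (1 - c ^ 2) • 1) :
    (c • 1 - I • K) * (c • 1 + I • K) = 1 := by
  simp only [sub_mul, mul_add, smul_mul_smul_comm, one_mul, mul_one, hK, I_mul_I]
  module

theorem Matrix.one_apply_prod_s11 {ι κ R : Type*} [DecidableEq ι] [DecidableEq κ]
    [MulZeroOneClass R] (i j : ι) (k l : κ) :
    (1 : Matrix (ι × κ) (ι × κ) R) (i, k) (j, l) =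
      (if i = j then 1 else 0) * (if k = l then 1 else 0) := by
  rw [← one_kronecker_one, kroneckerMap_apply, one_apply, one_apply]

section RMatrix

variable {ι κ : Type*} [DecidableEq ι] [DecidableEq κ]

/-- `R^{λα}_{βμ}` is the entry `rMatrix c A B (λ, α) (μ, β)`. -/
noncomputable def rMatrix (c : ℝ) (A : Matrix ι ι ℝ) (B : Matrix κ κ ℝ) :
    Matrix (ι × κ) (ι × κ) ℂ :=
  (c : ℂ) • 1 + I • (A ⊗ₖ B).map ofRealHom

theorem rMatrix_apply (c : ℝ) (A : Matrix ι ι ℝ) (B : Matrix κ κ ℝ) (i j : ι) (k l : κ) :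
    rMatrix c A B (i, k) (j, l) =
      c * ((if i = j then 1 else 0) * (if k = l then 1 else 0)) +
        I * ((A i j * B k l : ℝ) : ℂ) := by
  simp only [rMatrix, Matrix.add_apply, Matrix.smul_apply, one_apply_prod_s11, map_apply,
    kroneckerMap_apply, smul_eq_mul, ofRealHom_eq_coe]

theorem conj_rMatrix_apply (c : ℝ) (A : Matrix ι ι ℝ) (B : Matrix κ κ ℝ) (x y : ι × κ) :
    conj (rMatrix c A B x y) = rMatrix c (-A) B x y := by
  obtain ⟨i, k⟩ := x
  obtain ⟨j, l⟩ := y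
  simp only [rMatrix_apply, map_add, map_mul, conj_ofReal, conj_I, Matrix.neg_apply, neg_mul,
    ofReal_neg]
  split_ifs <;> simp

theorem rMatrix_apply_swap_fst (c : ℝ) (A : Matrix ι ι ℝ) (B : Matrix κ κ ℝ)
    (i j : ι) (k l : κ) :
    rMatrix c A B (i, k) (j, l) = rMatrix c Aᵀ B (j, k) (i, l) := by
  simp only [rMatrix_apply, transpose_apply, eq_comm (a := i)]

theorem rMatrix_apply_swap_snd (c : ℝ) (A : Matrix ι ι ℝ) (B : Matrix κ κ ℝ)
    (i j : ι) (k l : κ) :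
    rMatrix c A B (i, k) (j, l) = rMatrix c A Bᵀ (i, l) (j, k) := by
  simp only [rMatrix_apply, transpose_apply, eq_comm (a := k)]

theorem rMatrix_neg_left (c : ℝ) (A : Matrix ι ι ℝ) (B : Matrix κ κ ℝ) :
    rMatrix c (-A) B = rMatrix c A (-B) := by
  ext ⟨i, k⟩ ⟨j, l⟩
  simp only [rMatrix_apply, Matrix.neg_apply, neg_mul, mul_neg]

variable [Fintype ι] [Fintype κ]

theorem rMatrix_neg_mul_rMatrix (c α β : ℝ) (A : Matrix ι ι ℝ) (B : Matrix κ κ ℝ)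
    (hA : A * A = α • 1) (hB : B * B = β • 1) (h : c ^ 2 + α * β = 1) :
    rMatrix c (-A) B * rMatrix c A B = 1 := by
  have hK : (A ⊗ₖ B).map ofRealHom * (A ⊗ₖ B).map ofRealHom = (1 - (c : ℂ) ^ 2) • 1 := by
    rw [← Matrix.map_mul, ← mul_kronecker_mul, hA, hB, smul_kronecker, kronecker_smul,
      one_kronecker_one, smul_smul, eq_sub_of_add_eq' h]
    ext x y
    by_cases hxy : x = y <;> simp [one_apply, hxy]
  have hneg : ((-A) ⊗ₖ B).map ofRealHom = -(A ⊗ₖ B).map ofRealHom := by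
    ext ⟨i, k⟩ ⟨j, l⟩
    simp
  rw [rMatrix, rMatrix, hneg, smul_neg, ← sub_eq_add_neg]
  exact smul_one_sub_I_smul_mul_smul_one_add_I_smul _ _ hK

variable {c : ℝ} {A : Matrix ι ι ℝ} {B : Matrix κ κ ℝ}

theorem sum_conj_rMatrix_mul_rMatrix (hinv : rMatrix c (-A) B * rMatrix c A B = 1)
    (i j : ι) (k l : κ) :
    ∑ m, ∑ b, conj (rMatrix c A B (i, k) (m, b)) * rMatrix c A B (m, b) (j, l) =
      (if i = j then 1 else 0) * (if k = l then 1 else 0) := by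
  have h := congr_fun₂ hinv (i, k) (j, l)
  rw [mul_apply, Fintype.sum_prod_type, one_apply_prod_s11] at h
  simpa only [conj_rMatrix_apply] using h

theorem sum_rMatrix_mul_rMatrix_fst (hA : Aᵀ = -A)
    (hinv : rMatrix c (-A) B * rMatrix c A B = 1) (k l : κ) (i j : ι) :
    ∑ m, ∑ b, rMatrix c A B (m, k) (j, b) * rMatrix c A B (m, b) (i, l) =
      (if k = l then 1 else 0) * (if i = j then 1 else 0) := by
  have h := congr_fun₂ hinv (j, k) (i, l)
  rw [mul_apply, Fintype.sum_prod_type, one_apply_prod_s11, mul_comm] at h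
  simpa only [rMatrix_apply_swap_fst c A B _ j k, hA, eq_comm (a := j)] using h

theorem sum_rMatrix_mul_rMatrix_snd (hB : Bᵀ = -B)
    (hinv : rMatrix c (-A) B * rMatrix c A B = 1) (i j : ι) (k l : κ) :
    ∑ b, ∑ m, rMatrix c A B (i, b) (m, k) * rMatrix c A B (m, b) (j, l) =
      (if i = j then 1 else 0) * (if k = l then 1 else 0) := by
  have h := congr_fun₂ hinv (i, k) (j, l)
  rw [mul_apply, Fintype.sum_prod_type, one_apply_prod_s11, Finset.sum_comm] at h
  simpa only [rMatrix_apply_swap_snd c A B i _ _ k, hB, ← rMatrix_neg_left] using h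

end RMatrix

def jPlus (w : Fin 3 → ℝ) : Matrix (Fin 4) (Fin 4) ℝ := ∑ a, w a • Jmat (-1) a

theorem jPlus_eq (w : Fin 3 → ℝ) :
    jPlus w =
      !![0, -w 0, -w 1, -w 2; w 0, 0, w 2, -w 1; w 1, -w 2, 0, w 0; w 2, w 1, -w 0, 0] := by
  ext i j
  fin_cases i <;> fin_cases j <;> simp [jPlus, Jmat, eps, Fin.sum_univ_three]

theorem jPlus_mul_self (w : Fin 3 → ℝ) : jPlus w * jPlus w = (-∑ a, w a ^ 2) • 1 := by
  rw [jPlus_eq]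
  ext i j
  fin_cases i <;> fin_cases j <;> simp [mul_apply, Fin.sum_univ_four, Fin.sum_univ_three] <;> ring

theorem jPlus_transpose (w : Fin 3 → ℝ) : (jPlus w)ᵀ = -jPlus w := by
  rw [jPlus_eq]
  ext i j
  fin_cases i <;> fin_cases j <;> simp

theorem sum_sq_smul_add_smul_of_orthonormal {ι : Type*} [Fintype ι] {x y : ι → ℝ}
    (hx : ∑ i, x i ^ 2 = 1) (hy : ∑ i, y i ^ 2 = 1) (hxy : ∑ i, x i * y i = 0) (s t : ℝ) :
    ∑ i, (s * x i + t * y i) ^ 2 = s ^ 2 + t ^ 2 := by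
  have h : ∑ i, (s * x i + t * y i) ^ 2 =
      s ^ 2 * ∑ i, x i ^ 2 + 2 * s * t * ∑ i, x i * y i + t ^ 2 * ∑ i, y i ^ 2 := by
    simp only [Finset.mul_sum, ← Finset.sum_add_distrib]
    exact Finset.sum_congr rfl fun i _ => by ring
  rw [h, hx, hy, hxy]
  ring

/-- The quaternionic family `R^{λα}_{βμ} = u⁰ δ^λ_μ δ^α_β + i (J⁺_{n̂₁})^λ_μ (J⁺_ū)^α_β`
with `ū = u¹ n̂₁ + u² n̂₂`, `(u⁰)² + (u¹)² + (u²)² = 1`, and `n̂₁, n̂₂` orthonormal,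
satisfies the reality and centrality conditions. -/
theorem stmt11 (n1 n2 : Fin 3 → ℝ)
    (hn1 : ∑ a : Fin 3, n1 a ^ 2 = 1) (hn2 : ∑ a : Fin 3, n2 a ^ 2 = 1)
    (hortho : ∑ a : Fin 3, n1 a * n2 a = 0)
    (u0 u1 u2 : ℝ) (hu : u0 ^ 2 + u1 ^ 2 + u2 ^ 2 = 1)
    (ubar : Fin 3 → ℝ) (hubar : ubar = fun a => u1 * n1 a + u2 * n2 a)
    (R : Fin 4 → Fin 4 → Fin 4 → Fin 4 → ℂ)
    (hR : ∀ l a b m, R l a b m =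
      (u0 : ℂ) * ((if l = m then (1 : ℂ) else 0) * (if a = b then 1 else 0)) +
      Complex.I *
        (((∑ c : Fin 3, n1 c • Jmat (-1) c) l m : ℝ) *
         ((∑ c : Fin 3, ubar c • Jmat (-1) c) a b : ℝ) : ℝ)) :
    -- reality condition
    ((∀ (l n : Fin 4) (a g : Fin 4),
        ∑ m : Fin 4, ∑ b : Fin 4, (starRingEnd ℂ) (R l a b m) * R m b g n =
          (if l = n then (1 : ℂ) else 0) * (if a = g then 1 else 0)) ∧
     -- centrality conditions
     (∀ (g a m n : Fin 4),
        ∑ l : Fin 4, ∑ b : Fin 4, R l g b n * R l b a m =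
          (if g = a then (1 : ℂ) else 0) * (if m = n then 1 else 0)) ∧
     (∀ (l m b g : Fin 4),
        ∑ a : Fin 4, ∑ r : Fin 4, R l a b r * R r a g m =
          (if l = m then (1 : ℂ) else 0) * (if b = g then 1 else 0))) := by
  have hinv : rMatrix u0 (-jPlus n1) (jPlus ubar) * rMatrix u0 (jPlus n1) (jPlus ubar) = 1 := by
    refine rMatrix_neg_mul_rMatrix u0 (-1) (-(u1 ^ 2 + u2 ^ 2)) _ _ ?_ ?_
      (by linear_combination hu)
    · rw [jPlus_mul_self, hn1]
    · rw [jPlus_mul_self, hubar, sum_sq_smul_add_smul_of_orthonormal hn1 hn2 hortho]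
  obtain rfl : R = fun l a b m => rMatrix u0 (jPlus n1) (jPlus ubar) (l, a) (m, b) := by
    funext l a b m
    rw [hR, rMatrix_apply]
    rfl
  exact ⟨sum_conj_rMatrix_mul_rMatrix hinv, sum_rMatrix_mul_rMatrix_fst (jPlus_transpose n1) hinv,
    sum_rMatrix_mul_rMatrix_snd (jPlus_transpose ubar) hinv⟩
end

section
/- Let 𝒜 contain elements x₁^λ, x₂^α with x₁^λ x₁^μ = x₁^μ x₁^λ, x₂^α x₂^β = x₂^β x₂^α, and x₁^λ x₂^α = Σ R^{λα}_{βμ} x₂^β x₁^μ, and let 𝒞 contain Γ¹_λ, Γ²_α with Γ¹_λ Γ¹_μ + Γ¹_μ Γ¹_λ = 2δ_{λμ}, Γ²_α Γ²_β + Γ²_β Γ²_α = 2δ_{αβ}, and Γ²_β Γ¹_μ + Σ R^{λα}_{βμ} Γ¹_λ Γ²_α = 0. Then setting Γ(x) = Σ_λ Γ¹_λ ⊗ x₁^λ + Σ_α Γ²_α ⊗ x₂^α in 𝒞 ⊗ 𝒜, one has Γ(x)² = 1 ⊗ (Σ_λ (x₁^λ)² + Σ_α (x₂^α)²). -/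
/-!
Expanding `Γ(x)²` gives four double sums of the terms `(Γ Γ') ⊗ (x x')`. In each diagonal block
the commutativity of the `x`'s lets one symmetrise the `Γ`-factor, which the Clifford relations
turn into `2 δ`. In the mixed block, the exchange relation `x₁ x₂ = R · x₂ x₁` moves `R` across
the tensor sign onto `Γ¹ Γ²`, and the twisted anticommutation relation then cancels it against
the other mixed block.
-/

open scoped TensorProduct
open Finset

section

variable {K C A : Type*} [CommRing K] [Ring C] [Algebra K C] [Ring A] [Algebra K A]

theorem sum_sum_mul_tmul_mul_of_anticomm [Invertible (2 : K)] {ι : Type*} [Fintype ι]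
    [DecidableEq ι] (Γ : ι → C) (x : ι → A)
    (hx : ∀ l m, x l * x m = x m * x l)
    (hΓ : ∀ l m, Γ l * Γ m + Γ m * Γ l = if l = m then (2 : C) else 0) :
    ∑ l, ∑ m, (Γ l * Γ m) ⊗ₜ[K] (x l * x m) = (1 : C) ⊗ₜ[K] ∑ l, x l ^ 2 := by
  set S := ∑ l, ∑ m, (Γ l * Γ m) ⊗ₜ[K] (x l * x m)
  have hswap : S = ∑ l, ∑ m, (Γ m * Γ l) ⊗ₜ[K] (x l * x m) := by
    rw [sum_comm]
    exact sum_congr rfl fun l _ => sum_congr rfl fun m _ => by rw [hx]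
  refine (isUnit_of_invertible (2 : K)).smul_left_cancel.mp ?_
  calc (2 : K) • S
      = ∑ l, ∑ m, (Γ l * Γ m + Γ m * Γ l) ⊗ₜ[K] (x l * x m) := by
        rw [two_smul]
        nth_rewrite 2 [hswap]
        simp only [S, TensorProduct.add_tmul, sum_add_distrib]
    _ = ∑ l, (2 : C) ⊗ₜ[K] (x l * x l) := by
        simp only [hΓ, TensorProduct.ite_tmul, sum_ite_eq, mem_univ, if_true]
    _ = (2 : K) • (1 : C) ⊗ₜ[K] ∑ l, x l ^ 2 := by
        rw [TensorProduct.smul_tmul', two_smul, one_add_one_eq_two]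
        simp only [TensorProduct.tmul_sum, sq]

theorem sum_sum_tmul_sum_sum_smul {ι κ ι' κ' : Type*} [Fintype ι] [Fintype κ] [Fintype ι']
    [Fintype κ'] (R : ι → κ → ι' → κ' → K) (u : ι → κ → C) (v : ι' → κ' → A) :
    ∑ i, ∑ k, u i k ⊗ₜ[K] (∑ i', ∑ k', R i k i' k' • v i' k') =
      ∑ i', ∑ k', (∑ i, ∑ k, R i k i' k' • u i k) ⊗ₜ[K] v i' k' := by
  simp only [TensorProduct.tmul_sum, TensorProduct.sum_tmul, TensorProduct.tmul_smul,
    TensorProduct.smul_tmul']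
  calc _ = ∑ i', ∑ i, ∑ k, ∑ k', (R i k i' k' • u i k) ⊗ₜ[K] v i' k' :=
        (sum_congr rfl fun _ _ => sum_comm).trans sum_comm
    _ = _ := sum_congr rfl fun _ _ => (sum_congr rfl fun _ _ => sum_comm).trans sum_comm

theorem sum_sum_mul_tmul_mul_add_swap_eq_zero {ι κ : Type*} [Fintype ι] [Fintype κ]
    (R : ι → κ → κ → ι → K) (Γ1 : ι → C) (Γ2 : κ → C) (x1 : ι → A) (x2 : κ → A)
    (hrel : ∀ l a, x1 l * x2 a = ∑ b, ∑ m, R l a b m • (x2 b * x1 m))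
    (hcl : ∀ b m, Γ2 b * Γ1 m + ∑ l, ∑ a, R l a b m • (Γ1 l * Γ2 a) = 0) :
    ∑ l, ∑ a, (Γ1 l * Γ2 a) ⊗ₜ[K] (x1 l * x2 a) + ∑ b, ∑ m, (Γ2 b * Γ1 m) ⊗ₜ[K] (x2 b * x1 m) =
      0 := by
  simp only [hrel, sum_sum_tmul_sum_sum_smul, ← sum_add_distrib, ← TensorProduct.add_tmul,
    add_comm _ (Γ2 _ * Γ1 _), hcl, TensorProduct.zero_tmul, sum_const_zero]

end

/-- With the full set of relations in 𝒜 and Clifford relations in 𝒞, the element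
`Γ(x) = Σ Γ¹_λ ⊗ x₁^λ + Σ Γ²_α ⊗ x₂^α` satisfies `Γ(x)² = 1 ⊗ ‖x‖²`. -/
theorem stmt14 {N1 N2 : ℕ} {C A : Type*} [Ring C] [Algebra ℂ C] [Ring A] [Algebra ℂ A]
    (R : Fin N1 → Fin N2 → Fin N2 → Fin N1 → ℂ)
    (Γ1 : Fin N1 → C) (Γ2 : Fin N2 → C) (x1 : Fin N1 → A) (x2 : Fin N2 → A)
    (hc1 : ∀ l m, x1 l * x1 m = x1 m * x1 l)
    (hc2 : ∀ a b, x2 a * x2 b = x2 b * x2 a)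
    (hrel : ∀ l a, x1 l * x2 a = ∑ b : Fin N2, ∑ m : Fin N1, R l a b m • (x2 b * x1 m))
    (hΓ1 : ∀ l m, Γ1 l * Γ1 m + Γ1 m * Γ1 l = if l = m then (2 : C) else 0)
    (hΓ2 : ∀ a b, Γ2 a * Γ2 b + Γ2 b * Γ2 a = if a = b then (2 : C) else 0)
    (hcl : ∀ b m, Γ2 b * Γ1 m + ∑ l : Fin N1, ∑ a : Fin N2, R l a b m • (Γ1 l * Γ2 a) = 0) :
    ((∑ l : Fin N1, Γ1 l ⊗ₜ[ℂ] x1 l) + ∑ a : Fin N2, Γ2 a ⊗ₜ[ℂ] x2 a) ^ 2 =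
      (1 : C) ⊗ₜ[ℂ] ((∑ l : Fin N1, x1 l ^ 2) + ∑ a : Fin N2, x2 a ^ 2) := by
  have hcross := sum_sum_mul_tmul_mul_add_swap_eq_zero R Γ1 Γ2 x1 x2 hrel hcl
  rw [sq, add_mul, mul_add, mul_add, sum_mul_sum, sum_mul_sum, sum_mul_sum, sum_mul_sum]
  simp only [Algebra.TensorProduct.tmul_mul_tmul]
  rw [sum_sum_mul_tmul_mul_of_anticomm Γ1 x1 hc1 hΓ1,
    sum_sum_mul_tmul_mul_of_anticomm Γ2 x2 hc2 hΓ2, TensorProduct.tmul_add,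
    ← sub_eq_zero, ← hcross]
  abel
end
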